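/- arXiv:1612.02106 — 2 statements merged into one kernel-verified Lean document; each statement's English description precedes it below -/
import Mathlib

section
/- In the category of pointed posets and strict monotone maps, let DX be the set of countably generated order ideals of X ordered by inclusion, with η^D_X(a) = ↓{a} and μ^D_X(𝒜) = ⋃𝒜 for 𝒜 ∈ D²X. Then (D, μ^D, η^D) is a monad: μ ∘ Dμ = μ ∘ μD, μ ∘ Dη = id, and μ ∘ ηD = id. -/
/-- `S` is an ω-ideal relative to the ambient set `U`:
`S ⊆ U` and `S` is the down-closure inside `U` of a countable
nonempty directed set `C ⊆ S`. -/
def IsOmegaIdealIn {α : Type*} [Preorder α] (U : Set α) (S : Set α) : Prop :=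
  S ⊆ U ∧ ∃ C : Set α, C ⊆ S ∧ C.Countable ∧ C.Nonempty ∧ DirectedOn (· ≤ ·) C ∧
    S = {x ∈ U | ∃ c ∈ C, x ≤ c}

/-- `S` is an ω-ideal of `α` (an element of `DX` for `X = α`). -/
def IsOmegaIdeal {α : Type*} [Preorder α] (S : Set α) : Prop :=
  IsOmegaIdealIn Set.univ S

/-- An element of `D²X`: an ω-ideal (w.r.t. inclusion) of the poset `DX`
of ω-ideals of `X`. -/
def IsOmegaIdeal₂ {α : Type*} [Preorder α] (𝒜 : Set (Set α)) : Prop :=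
  IsOmegaIdealIn {I : Set α | IsOmegaIdeal I} 𝒜

/-- An element of `D³X`. -/
def IsOmegaIdeal₃ {α : Type*} [Preorder α] (ℬ : Set (Set (Set α))) : Prop :=
  IsOmegaIdealIn {𝒜 : Set (Set α) | IsOmegaIdeal₂ 𝒜} ℬ

/-- The principal ideal `↓{a}`, i.e. `η^D_X(a)`. -/
def principalIdeal {α : Type*} [Preorder α] (a : α) : Set α := {x | x ≤ a}

/-!
A countable directed family `𝒞` of ω-ideals generating `𝒜 ∈ D²X` has the same union as `𝒜`,
and choosing a countable generator of each member of `𝒞` gives a countable generator of that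
union; it is directed because its down-closure, a directed union of directed sets, is.
The monad laws reduce to identities between unions, because every point `x` of an ω-ideal `I`
lies in the ω-ideal `↓{x} ⊆ I`.
-/

section Sets

variable {α ι : Type*}

lemma sUnion_setOf_subset_eq {P : Set α → Prop} {T : Set α}
    (hT : ∀ x ∈ T, ∃ J, P J ∧ J ⊆ T ∧ x ∈ J) :
    ⋃₀ {J | P J ∧ J ⊆ T} = T := by
  refine subset_antisymm (Set.sUnion_subset fun J hJ => hJ.2) fun x hx => ?_
  obtain ⟨J, hPJ, hJT, hxJ⟩ := hT x hx
  exact ⟨J, ⟨hPJ, hJT⟩, hxJ⟩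

lemma sUnion_setOf_exists_subset_eq {P : Set α → Prop} {s : Set ι} {T : ι → Set α}
    (hT : ∀ i ∈ s, ∀ x ∈ T i, ∃ J, P J ∧ J ⊆ T i ∧ x ∈ J) :
    ⋃₀ {J | P J ∧ ∃ i ∈ s, J ⊆ T i} = ⋃ i ∈ s, T i := by
  refine subset_antisymm (Set.sUnion_subset fun J ⟨_, i, hi, hJ⟩ => ?_) fun x hx => ?_
  · exact hJ.trans (Set.subset_biUnion_of_mem hi)
  · obtain ⟨i, hi, hx⟩ := Set.mem_iUnion₂.1 hx
    obtain ⟨J, hPJ, hJT, hxJ⟩ := hT i hi x hx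
    exact ⟨J, ⟨hPJ, i, hi, hJT⟩, hxJ⟩

lemma sUnion_sep_exists_subset_eq_sUnion {U 𝒞 : Set (Set α)} (h𝒞 : 𝒞 ⊆ U) :
    ⋃₀ {I ∈ U | ∃ J ∈ 𝒞, I ⊆ J} = ⋃₀ 𝒞 :=
  subset_antisymm
    (Set.sUnion_subset fun _ ⟨_, _, hJ, hIJ⟩ => hIJ.trans (Set.subset_sUnion_of_mem hJ))
    (Set.sUnion_mono fun J hJ => ⟨h𝒞 hJ, J, hJ, subset_rfl⟩)

lemma biUnion_sUnion_eq_sUnion_sUnion (ℬ : Set (Set (Set α))) : ⋃ 𝒜 ∈ ℬ, ⋃₀ 𝒜 = ⋃₀ ⋃₀ ℬ := by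
  rw [Set.sUnion_eq_biUnion (s := ℬ), Set.sUnion_iUnion]
  simp_rw [Set.sUnion_iUnion]

end Sets

section Preorder

variable {α : Type*} [Preorder α]

lemma directedOn_lowerClosure_iff {s : Set α} :
    DirectedOn (· ≤ ·) (lowerClosure s : Set α) ↔ DirectedOn (· ≤ ·) s := by
  refine ⟨fun h a ha b hb => ?_, fun h a ha b hb => ?_⟩
  · obtain ⟨c, hc, hac, hbc⟩ := h a (subset_lowerClosure ha) b (subset_lowerClosure hb)
    obtain ⟨d, hd, hcd⟩ := mem_lowerClosure.1 hc
    exact ⟨d, hd, hac.trans hcd, hbc.trans hcd⟩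
  · obtain ⟨a', ha', haa'⟩ := mem_lowerClosure.1 ha
    obtain ⟨b', hb', hbb'⟩ := mem_lowerClosure.1 hb
    obtain ⟨c, hc, ha'c, hb'c⟩ := h a' ha' b' hb'
    exact ⟨c, subset_lowerClosure hc, haa'.trans ha'c, hbb'.trans hb'c⟩

lemma isOmegaIdeal_iff {S : Set α} :
    IsOmegaIdeal S ↔ ∃ C : Set α, C.Countable ∧ C.Nonempty ∧ DirectedOn (· ≤ ·) C ∧
      S = lowerClosure C := by
  have hrep (C : Set α) : {x ∈ Set.univ | ∃ c ∈ C, x ≤ c} = (lowerClosure C : Set α) := by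
    ext; simp
  constructor
  · rintro ⟨-, C, -, hC, hne, hdir, rfl⟩
    exact ⟨C, hC, hne, hdir, hrep C⟩
  · rintro ⟨C, hC, hne, hdir, rfl⟩
    exact ⟨Set.subset_univ _, C, subset_lowerClosure, hC, hne, hdir, (hrep C).symm⟩

lemma IsOmegaIdeal.isLowerSet {S : Set α} (hS : IsOmegaIdeal S) : IsLowerSet S := by
  obtain ⟨C, -, -, -, rfl⟩ := isOmegaIdeal_iff.1 hS
  exact (lowerClosure C).lower

lemma IsOmegaIdeal.directedOn {S : Set α} (hS : IsOmegaIdeal S) : DirectedOn (· ≤ ·) S := by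
  obtain ⟨C, -, -, hdir, rfl⟩ := isOmegaIdeal_iff.1 hS
  exact directedOn_lowerClosure_iff.2 hdir

lemma isOmegaIdeal_principalIdeal (a : α) : IsOmegaIdeal (principalIdeal a) :=
  isOmegaIdeal_iff.2 ⟨{a}, Set.countable_singleton a, Set.singleton_nonempty a,
    directedOn_singleton a, by ext; simp [principalIdeal]⟩

lemma IsOmegaIdeal.principalIdeal_subset {S : Set α} (hS : IsOmegaIdeal S) {a : α}
    (ha : a ∈ S) : principalIdeal a ⊆ S :=
  hS.isLowerSet.Iic_subset ha

lemma IsOmegaIdeal.exists_isOmegaIdeal_subset_mem {S : Set α} (hS : IsOmegaIdeal S) :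
    ∀ x ∈ S, ∃ J, IsOmegaIdeal J ∧ J ⊆ S ∧ x ∈ J :=
  fun x hx => ⟨principalIdeal x, isOmegaIdeal_principalIdeal x, hS.principalIdeal_subset hx,
    le_refl x⟩

lemma IsOmegaIdeal.biUnion_principalIdeal {S : Set α} (hS : IsOmegaIdeal S) :
    ⋃ a ∈ S, principalIdeal a = S :=
  subset_antisymm (Set.iUnion₂_subset fun _ => hS.principalIdeal_subset)
    fun a ha => Set.mem_biUnion ha (le_refl a)

lemma IsOmegaIdeal₂.exists_isOmegaIdeal_subset_mem {𝒜 : Set (Set α)} (h𝒜 : IsOmegaIdeal₂ 𝒜) :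
    ∀ x ∈ ⋃₀ 𝒜, ∃ J, IsOmegaIdeal J ∧ J ⊆ ⋃₀ 𝒜 ∧ x ∈ J :=
  fun _ ⟨I, hI, hx⟩ => ⟨I, h𝒜.1 hI, Set.subset_sUnion_of_mem hI, hx⟩

lemma IsOmegaIdeal₂.sUnion {𝒜 : Set (Set α)} (h𝒜 : IsOmegaIdeal₂ 𝒜) : IsOmegaIdeal (⋃₀ 𝒜) := by
  obtain ⟨h𝒜U, 𝒞, h𝒞𝒜, h𝒞c, ⟨J₀, hJ₀⟩, h𝒞dir, h𝒜eq⟩ := h𝒜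
  have h𝒞 : ∀ J ∈ 𝒞, IsOmegaIdeal J := fun J hJ => h𝒜U (h𝒞𝒜 hJ)
  choose! gen hgenc hgenne hgendir hgen using fun J hJ => isOmegaIdeal_iff.1 (h𝒞 J hJ)
  have hunion : ⋃₀ 𝒞 = lowerClosure (⋃ J ∈ 𝒞, gen J) := by
    rw [Set.sUnion_eq_biUnion, lowerClosure_iUnion]
    simp_rw [lowerClosure_iUnion, LowerSet.coe_iSup]
    exact Set.iUnion₂_congr hgen
  rw [h𝒜eq, sUnion_sep_exists_subset_eq_sUnion (h𝒞𝒜.trans h𝒜U), isOmegaIdeal_iff]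
  refine ⟨⋃ J ∈ 𝒞, gen J, h𝒞c.biUnion hgenc,
    (hgenne J₀ hJ₀).mono (Set.subset_biUnion_of_mem hJ₀), ?_, hunion⟩
  rw [← directedOn_lowerClosure_iff, ← hunion]
  exact Set.directedOn_sUnion h𝒞dir fun J hJ => (h𝒞 J hJ).directedOn

end Preorder

theorem stmt_8_general (X : Type*) [PartialOrder X] :
    -- well-definedness of the unit and multiplication
    (∀ a : X, IsOmegaIdeal (principalIdeal a)) ∧
    (∀ 𝒜 : Set (Set X), IsOmegaIdeal₂ 𝒜 → IsOmegaIdeal (⋃₀ 𝒜)) ∧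
    -- associativity: `μ ∘ Dμ = μ ∘ μD` on `D³X`
    (∀ ℬ : Set (Set (Set X)), IsOmegaIdeal₃ ℬ →
      ⋃₀ {J : Set X | IsOmegaIdeal J ∧ ∃ 𝒜 ∈ ℬ, J ⊆ ⋃₀ 𝒜} = ⋃₀ (⋃₀ ℬ)) ∧
    -- right unit: `μ ∘ Dη = id` on `DX`
    (∀ I : Set X, IsOmegaIdeal I →
      ⋃₀ {J : Set X | IsOmegaIdeal J ∧ ∃ a ∈ I, J ⊆ principalIdeal a} = I) ∧
    -- left unit: `μ ∘ ηD = id` on `DX`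
    (∀ I : Set X, IsOmegaIdeal I →
      ⋃₀ {J : Set X | IsOmegaIdeal J ∧ J ⊆ I} = I) := by
  refine ⟨isOmegaIdeal_principalIdeal, fun _ => IsOmegaIdeal₂.sUnion, fun ℬ hℬ => ?_,
    fun I hI => ?_, fun I hI => sUnion_setOf_subset_eq hI.exists_isOmegaIdeal_subset_mem⟩
  · rw [sUnion_setOf_exists_subset_eq fun 𝒜 h𝒜 => (hℬ.1 h𝒜).exists_isOmegaIdeal_subset_mem,
      biUnion_sUnion_eq_sUnion_sUnion]
  · rw [sUnion_setOf_exists_subset_eq fun a _ =>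
      (isOmegaIdeal_principalIdeal a).exists_isOmegaIdeal_subset_mem, hI.biUnion_principalIdeal]

/-- On pointed posets, with `DX` the set of countably
generated order ideals ordered by inclusion, `η^D_X(a) = ↓{a}` and
`μ^D_X(𝒜) = ⋃𝒜`, the data `(D, μ^D, η^D)` forms a monad: `η` and `μ` are
well-defined, `μ ∘ Dμ = μ ∘ μD`, `μ ∘ Dη = id`, and `μ ∘ ηD = id`.
(Here the functorial action of `D` on a map is taking the down-closure of the
image, so `Dη(I) = {J ∈ DX | ∃ a ∈ I, J ⊆ ↓{a}}` and
`Dμ(ℬ) = {J ∈ DX | ∃ 𝒜 ∈ ℬ, J ⊆ ⋃𝒜}`.) -/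
theorem stmt_8 (X : Type*) [PartialOrder X] [OrderBot X] :
    -- well-definedness of the unit and multiplication
    (∀ a : X, IsOmegaIdeal (principalIdeal a)) ∧
    (∀ 𝒜 : Set (Set X), IsOmegaIdeal₂ 𝒜 → IsOmegaIdeal (⋃₀ 𝒜)) ∧
    -- associativity: `μ ∘ Dμ = μ ∘ μD` on `D³X`
    (∀ ℬ : Set (Set (Set X)), IsOmegaIdeal₃ ℬ →
      ⋃₀ {J : Set X | IsOmegaIdeal J ∧ ∃ 𝒜 ∈ ℬ, J ⊆ ⋃₀ 𝒜} = ⋃₀ (⋃₀ ℬ)) ∧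
    -- right unit: `μ ∘ Dη = id` on `DX`
    (∀ I : Set X, IsOmegaIdeal I →
      ⋃₀ {J : Set X | IsOmegaIdeal J ∧ ∃ a ∈ I, J ⊆ principalIdeal a} = I) ∧
    -- left unit: `μ ∘ ηD = id` on `DX`
    (∀ I : Set X, IsOmegaIdeal I →
      ⋃₀ {J : Set X | IsOmegaIdeal J ∧ J ⊆ I} = I) :=
  stmt_8_general X
end

section
/- Let A be a Δ-regular algebra with structure map β : FT(A) → A extended to ΔA by β(t) = ⋁{β(s) : s ≪ t}. Then (A, β) is an Eilenberg–Moore algebra for the monad Δ: β(↓{a}-singleton term) = a for a ∈ A, and for any t ∈ Δ(ΔA), β(μ^Δ_A(t)) = β(Δβ(t)). -/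
/-- A ranked alphabet (signature): a set of symbols with arities. -/
structure Signature where
  symb : Type
  ar : symb → ℕ

/-- A partial Σ-coterm over `X`: a finite or infinite partial Σ-labeled tree
whose internal nodes are labeled by operation symbols (with children indexed by
the arity, some possibly missing) and whose leaves may be labeled by variables
from `X`.  It is represented by its (partial) labeling function on tree
positions. -/
structure Coterm (σ : Signature) (X : Type*) where
  label : List ℕ → Option (σ.symb ⊕ X)
  consistent : ∀ p i, (label (p ++ [i])).isSome →
    ∃ f, label p = some (Sum.inl f) ∧ i < σ.ar f

namespace Coterm

variable {σ : Signature} {X Y : Type*}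

theorem ext' {s t : Coterm σ X} (h : s.label = t.label) : s = t := by
  cases s; cases t; cases h; rfl

/-- The approximation order: `s ≤ t` iff `s` is obtained from `t` by deleting
subterms, i.e. `s` agrees with `t` wherever `s` is defined. -/
instance : PartialOrder (Coterm σ X) where
  le s t := ∀ p v, s.label p = some v → t.label p = some v
  le_refl s := fun _ _ h => h
  le_trans s t u h₁ h₂ := fun p v h => h₂ p v (h₁ p v h)
  le_antisymm s t h₁ h₂ := by
    apply ext'; funext p
    cases hs : s.label p with
    | some v => exact (h₁ p v hs).symm
    | none =>
      cases ht : t.label p with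
      | some v => exact absurd (h₂ p v ht) (by rw [hs]; simp)
      | none => rfl

/-- The empty term `⊥`. -/
instance : OrderBot (Coterm σ X) where
  bot := ⟨fun _ => none, by intro p i h; simp at h⟩
  bot_le t := by intro p v h; simp only at h; exact absurd h (by simp)

@[simp] theorem bot_label (p : List ℕ) : (⊥ : Coterm σ X).label p = none := rfl

/-- The coterm consisting of a single variable. -/
def var (x : X) : Coterm σ X where
  label p := if p = [] then some (Sum.inr x) else none
  consistent := by
    intro p i h
    rw [if_neg (by simp)] at h
    simp at h

/-- The labeling function of `node f ts`. -/
def nodeLabel (f : σ.symb) (ts : Fin (σ.ar f) → Coterm σ X) :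
    List ℕ → Option (σ.symb ⊕ X)
  | [] => some (Sum.inl f)
  | i :: q => if h : i < σ.ar f then (ts ⟨i, h⟩).label q else none

/-- The Σ-operations on coterms: `node f ts` is the tree with root label `f`
and children `ts`. -/
def node (f : σ.symb) (ts : Fin (σ.ar f) → Coterm σ X) : Coterm σ X where
  label := nodeLabel f ts
  consistent := by
    intro p i hp
    cases p with
    | nil =>
      refine ⟨f, rfl, ?_⟩
      simp only [List.nil_append, nodeLabel] at hp
      by_contra hlt
      rw [dif_neg hlt] at hp
      simp at hp
    | cons j q =>
      simp only [List.cons_append, nodeLabel] at hp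
      by_cases hj : j < σ.ar f
      · rw [dif_pos hj] at hp
        obtain ⟨g, hg, hi⟩ := (ts ⟨j, hj⟩).consistent q i hp
        exact ⟨g, by simp only [nodeLabel, dif_pos hj]; exact hg, hi⟩
      · rw [dif_neg hj] at hp
        simp at hp

/-- A coterm is finite if it has finitely many positions;
`FT(X)` is the set of finite partial terms. -/
def IsFinite (t : Coterm σ X) : Prop := {p : List ℕ | (t.label p).isSome}.Finite

/-- `s ≪ t`: `s` is finite and is obtained from `t` by deleting subterms. -/
def Ll (s t : Coterm σ X) : Prop := s.IsFinite ∧ s ≤ t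

/-- Relabeling of variables along a map `h : X → Y`; this is the unique
ω-continuous algebra morphism `CT(X) → CT(Y)` extending `x ↦ h x` (viewing
variables of `Y` as coterms), and also gives the functorial action of the
coterm monad. -/
def rename (h : X → Y) (t : Coterm σ X) : Coterm σ Y where
  label p := (t.label p).map (Sum.map id h)
  consistent := by
    intro p i hp
    rw [Option.isSome_map] at hp
    obtain ⟨f, hf, hi⟩ := t.consistent p i hp
    exact ⟨f, by rw [hf]; rfl, hi⟩

end Coterm

/-- `g : CT(X) → CT(Y)` is a morphism of ω-continuous algebras: strict,
monotone, commuting with the Σ-operations, and preserving suprema of countable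
directed sets. -/
structure IsOmegaContMorphism {σ : Signature} {X Y : Type*}
    (g : Coterm σ X → Coterm σ Y) : Prop where
  monotone : Monotone g
  strict : g ⊥ = ⊥
  ops : ∀ (f : σ.symb) (ts : Fin (σ.ar f) → Coterm σ X),
    g (Coterm.node f ts) = Coterm.node f (fun i => g (ts i))
  cont : ∀ S : Set (Coterm σ X), S.Countable → S.Nonempty →
    DirectedOn (· ≤ ·) S → ∀ t, IsLUB S t → IsLUB (g '' S) (g t)

/-- A quasi-regular family: an assignment to each set `X` of an ordered
subalgebra `ΔX` of `CT(X)` containing the variables, such that for every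
ω-continuous morphism `h : CT(X) → CT(Y)` with `h(X) ⊆ ΔY` one has
`h(ΔX) ⊆ ΔY`. -/
structure QuasiRegular (σ : Signature) where
  Del : (X : Type) → Set (Coterm σ X)
  bot_mem : ∀ X : Type, (⊥ : Coterm σ X) ∈ Del X
  var_mem : ∀ (X : Type) (x : X), Coterm.var x ∈ Del X
  op_closed : ∀ (X : Type) (f : σ.symb) (ts : Fin (σ.ar f) → Coterm σ X),
    (∀ i, ts i ∈ Del X) → Coterm.node f ts ∈ Del X
  stable : ∀ (X Y : Type) (g : Coterm σ X → Coterm σ Y),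
    IsOmegaContMorphism g → (∀ x : X, g (Coterm.var x) ∈ Del Y) →
    ∀ t ∈ Del X, g t ∈ Del Y

/-- An ordered Σ-algebra structure on a pointed poset `A`. -/
structure OrderedAlg (σ : Signature) (A : Type*) [PartialOrder A] [OrderBot A] where
  op : ∀ f : σ.symb, (Fin (σ.ar f) → A) → A
  mono : ∀ f (a b : Fin (σ.ar f) → A), (∀ i, a i ≤ b i) → op f a ≤ op f b

/-- `β : FT(A) → A` interprets finite partial terms over `A` in the ordered
algebra `(A, alg)`: it is the structure map of `A` as an Eilenberg–Moore
algebra for the finite partial term monad.  (The value of `β` on non-finite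
coterms is irrelevant.) -/
def IsFinInterp {σ : Signature} {A : Type*} [PartialOrder A] [OrderBot A]
    (alg : OrderedAlg σ A) (β : Coterm σ A → A) : Prop :=
  (β ⊥ = ⊥) ∧
  (∀ a : A, β (Coterm.var a) = a) ∧
  (∀ (f : σ.symb) (ts : Fin (σ.ar f) → Coterm σ A), (∀ i, (ts i).IsFinite) →
    β (Coterm.node f ts) = alg.op f (fun i => β (ts i))) ∧
  (∀ s s' : Coterm σ A, s.IsFinite → s'.IsFinite → s ≤ s' → β s ≤ β s')

/-- A Δ-set in `A` (w.r.t. the interpretation `β`): the set of values of the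
finite approximants of some term `t ∈ ΔA`. -/
def IsDelSet {σ : Signature} (Q : QuasiRegular σ) {A : Type} [PartialOrder A]
    [OrderBot A] (β : Coterm σ A → A) (D : Set A) : Prop :=
  ∃ t ∈ Q.Del A, D = {x : A | ∃ s, Coterm.Ll s t ∧ x = β s}

/-- `A` is a Δ-regular algebra with (extended) structure map `β : ΔA → A`:
`β` interprets finite terms, the supremum of each Δ-set
`{β(s) : s ≪ t}` (for `t ∈ ΔA`) exists and equals `β(t)`
(this is the extension `β(t) = ⋁{β(s) : s ≪ t}`), and the algebraic
operations preserve suprema of Δ-sets. -/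
def IsDelStructure {σ : Signature} (Q : QuasiRegular σ) {A : Type}
    [PartialOrder A] [OrderBot A] (alg : OrderedAlg σ A)
    (β : Coterm σ A → A) : Prop :=
  IsFinInterp alg β ∧
  (∀ t ∈ Q.Del A, IsLUB {x : A | ∃ s, Coterm.Ll s t ∧ x = β s} (β t)) ∧
  (∀ (f : σ.symb) (as : Fin (σ.ar f) → A) (i : Fin (σ.ar f)),
    ∀ t ∈ Q.Del A,
      IsLUB {x : A | ∃ s, Coterm.Ll s t ∧
          x = alg.op f (Function.update as i (β s))}
        (alg.op f (Function.update as i (β t))))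

/-- The multiplication (substitution/flattening) of the coterm monad,
characterized as the unique ω-continuous morphism `CT(CT X) → CT X` sending
each variable `s ∈ CT X` to `s` itself. -/
def IsFlatten {σ : Signature} {X : Type*}
    (flat : Coterm σ (Coterm σ X) → Coterm σ X) : Prop :=
  IsOmegaContMorphism flat ∧ ∀ s : Coterm σ X, flat (Coterm.var s) = s

/-! Both sides have the form `β (g t)` for an ω-continuous morphism `g : CT(ΔA) → CT(A)` that
maps `Δ(ΔA)` into `ΔA`: `g₁ = μ ∘ CT(val)` and `g₂ = CT(β ∘ val)`, and `β ∘ g₁`, `β ∘ g₂` agree on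
variables. On finite terms `β ∘ g` is then computed by the same recursion, since `β` commutes with
the operations on `ΔA`: this is where the operations preserving Δ-suprema in each argument enter.
For general `t`, `g t` is the supremum of the directed set of `g u` over the finite approximants
`u ≪ t`; as finite coterms are compact, each `s ≪ g₁ t` lies below some `g₁ u`, whence
`β (g₁ t) ≤ β (g₂ t)`, and symmetrically. -/

theorem le_of_forall_pi_le_of_update_le {ι α γ : Type*} [Fintype ι] [DecidableEq ι] [Preorder γ]
    {F : (ι → α) → γ} {D : ι → Set α} {x : ι → α} {b : γ}
    (hF : ∀ a i, (∀ y ∈ D i, F (Function.update a i y) ≤ b) → F (Function.update a i (x i)) ≤ b)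
    (hb : ∀ y, (∀ i, y i ∈ D i) → F y ≤ b) : F x ≤ b := by
  suffices h : ∀ I : Finset ι, ∀ y, (∀ i ∉ I, y i ∈ D i) → (∀ i ∈ I, y i = x i) → F y ≤ b from
    h Finset.univ x (by simp) (fun _ _ => rfl)
  intro I
  induction I using Finset.induction_on with
  | empty => exact fun y hy _ => hb y fun i => hy i (Finset.notMem_empty i)
  | insert a I haI ih =>
    intro y hyD hyx
    rw [← Function.update_eq_self a y, hyx a (Finset.mem_insert_self a I)]
    refine hF y a fun z hz => ih _ (fun i hi => ?_) (fun i hi => ?_)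
    · rcases eq_or_ne i a with rfl | hia
      · simpa using hz
      · simpa [hia] using hyD i (by simp [hia, hi])
    · rw [Function.update_of_ne (ne_of_mem_of_not_mem hi haI)]
      exact hyx i (Finset.mem_insert_of_mem hi)

namespace Coterm

variable {σ : Signature} {X Y : Type*}

def dom (t : Coterm σ X) : Set (List ℕ) := {p | (t.label p).isSome}

theorem mem_dom {t : Coterm σ X} {p : List ℕ} : p ∈ t.dom ↔ (t.label p).isSome := Iff.rfl

theorem mem_dom_of_prefix (t : Coterm σ X) {p q : List ℕ} (hpq : p <+: q) (hq : q ∈ t.dom) :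
    p ∈ t.dom := by
  obtain ⟨r, rfl⟩ := hpq
  induction r using List.reverseRecOn with
  | nil => simpa using hq
  | append_singleton r i ih =>
    rw [← List.append_assoc] at hq
    obtain ⟨f, hf, -⟩ := t.consistent _ i hq
    exact ih (by simp [mem_dom, hf])

theorem exists_label_nil_of_mem_dom_cons (t : Coterm σ X) {i : ℕ} {q : List ℕ}
    (h : i :: q ∈ t.dom) : ∃ f, t.label [] = some (Sum.inl f) ∧ i < σ.ar f :=
  t.consistent [] i (t.mem_dom_of_prefix (List.prefix_cons_inj i |>.2 (List.nil_prefix)) h)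

@[simp] theorem label_node_nil (f : σ.symb) (ts : Fin (σ.ar f) → Coterm σ X) :
    (node f ts).label [] = some (Sum.inl f) := rfl

@[simp] theorem label_node_cons (f : σ.symb) (ts : Fin (σ.ar f) → Coterm σ X) (i : ℕ)
    (q : List ℕ) :
    (node f ts).label (i :: q) = if h : i < σ.ar f then (ts ⟨i, h⟩).label q else none := rfl

@[simp] theorem label_var (x : X) (p : List ℕ) :
    (var x : Coterm σ X).label p = if p = [] then some (Sum.inr x) else none := rfl

def child (t : Coterm σ X) (i : ℕ) : Coterm σ X where
  label q := t.label (i :: q)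
  consistent p j hp := t.consistent (i :: p) j hp

theorem eq_bot_of_label_nil {t : Coterm σ X} (h : t.label [] = none) : t = ⊥ := by
  refine ext' (funext fun p => Option.eq_none_iff_forall_not_mem.2 fun v hv => ?_)
  have := t.mem_dom_of_prefix (List.nil_prefix (l := p)) (by simp [mem_dom, Option.mem_def.1 hv])
  simp [mem_dom, h] at this

theorem eq_var_of_label_nil {t : Coterm σ X} {x : X} (h : t.label [] = some (Sum.inr x)) :
    t = var x := by
  refine ext' (funext fun p => ?_)
  rcases p with _ | ⟨i, q⟩
  · simpa [var] using h
  · rw [label_var, if_neg (List.cons_ne_nil i q), ← Option.not_isSome_iff_eq_none]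
    intro hq
    obtain ⟨f, hf, -⟩ := t.exists_label_nil_of_mem_dom_cons hq
    simp [h] at hf

theorem eq_node_of_label_nil {t : Coterm σ X} {f : σ.symb} (h : t.label [] = some (Sum.inl f)) :
    t = node f (fun i => t.child i) := by
  refine ext' (funext fun p => ?_)
  rcases p with _ | ⟨i, q⟩
  · exact h
  · by_cases hi : i < σ.ar f
    · simp [hi, child]
    · rw [label_node_cons, dif_neg hi, ← Option.not_isSome_iff_eq_none]
      intro hq
      obtain ⟨g, hg, hig⟩ := t.exists_label_nil_of_mem_dom_cons hq
      rw [h, Option.some_inj, Sum.inl.injEq] at hg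
      exact hi (hg ▸ hig)

theorem eq_bot_or_var_or_node (t : Coterm σ X) :
    t = ⊥ ∨ (∃ x, t = var x) ∨ ∃ f ts, t = node f ts := by
  match h : t.label [] with
  | none => exact .inl (eq_bot_of_label_nil h)
  | some (.inr x) => exact .inr (.inl ⟨x, eq_var_of_label_nil h⟩)
  | some (.inl f) => exact .inr (.inr ⟨f, _, eq_node_of_label_nil h⟩)

theorem dom_node_subset (f : σ.symb) (ts : Fin (σ.ar f) → Coterm σ X) :
    (node f ts).dom ⊆ insert [] (⋃ i, (i.val :: ·) '' (ts i).dom) := by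
  rintro (_ | ⟨j, q⟩) h
  · exact Set.mem_insert _ _
  · by_cases hj : j < σ.ar f
    · refine Set.mem_insert_of_mem _ (Set.mem_iUnion.2 ⟨⟨j, hj⟩, q, ?_, rfl⟩)
      simpa [mem_dom, hj] using h
    · simp [mem_dom, hj] at h

theorem image_cons_dom_subset (f : σ.symb) (ts : Fin (σ.ar f) → Coterm σ X) (i : Fin (σ.ar f)) :
    (i.val :: ·) '' (ts i).dom ⊆ (node f ts).dom := by
  rintro _ ⟨q, hq, rfl⟩
  simpa [mem_dom, i.isLt] using hq

theorem isFinite_node {f : σ.symb} {ts : Fin (σ.ar f) → Coterm σ X} :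
    (node f ts).IsFinite ↔ ∀ i, (ts i).IsFinite := by
  refine ⟨fun h i => ?_, fun h => ?_⟩
  · exact Set.Finite.of_finite_image (h.subset (image_cons_dom_subset f ts i))
      (List.cons_injective.injOn)
  · exact ((Set.finite_iUnion fun i => (h i).image _).insert _).subset (dom_node_subset f ts)

theorem ncard_dom_lt_node {f : σ.symb} {ts : Fin (σ.ar f) → Coterm σ X}
    (h : (node f ts).IsFinite) (i : Fin (σ.ar f)) :
    (ts i).dom.ncard < (node f ts).dom.ncard := by
  have hnil : [] ∉ (i.val :: ·) '' (ts i).dom := by simp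
  calc (ts i).dom.ncard = ((i.val :: ·) '' (ts i).dom).ncard :=
        (Set.ncard_image_of_injective _ List.cons_injective).symm
    _ < (insert [] ((i.val :: ·) '' (ts i).dom)).ncard := by
        rw [Set.ncard_insert_of_notMem hnil (h.subset (image_cons_dom_subset f ts i))]
        exact Nat.lt_succ_self _
    _ ≤ (node f ts).dom.ncard :=
        Set.ncard_le_ncard (Set.insert_subset (by simp [mem_dom]) (image_cons_dom_subset f ts i)) h

theorem node_le_node_iff {f : σ.symb} {ts ts' : Fin (σ.ar f) → Coterm σ X} :
    node f ts ≤ node f ts' ↔ ∀ i, ts i ≤ ts' i := by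
  refine ⟨fun h i q v hq => ?_, fun h p v hp => ?_⟩
  · simpa [hq] using h (i.val :: q) v
  · rcases p with _ | ⟨i, q⟩
    · exact hp
    · by_cases hi : i < σ.ar f
      · simp only [label_node_cons, hi, dif_pos] at hp ⊢
        exact h _ q v hp
      · simp [hi] at hp

theorem IsFinite.induction_on {P : Coterm σ X → Prop} {t : Coterm σ X} (ht : t.IsFinite)
    (bot : P ⊥) (var : ∀ x, P (var x))
    (node : ∀ f ts, (∀ i, (ts i).IsFinite) → (∀ i, P (ts i)) → P (node f ts)) : P t := by
  induction hn : t.dom.ncard using Nat.strong_induction_on generalizing t with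
  | _ n ih =>
  rcases eq_bot_or_var_or_node t with rfl | ⟨x, rfl⟩ | ⟨f, ts, rfl⟩
  · exact bot
  · exact var x
  · have hts := isFinite_node.1 ht
    exact node f ts hts fun i => ih _ (hn ▸ ncard_dom_lt_node ht i) (hts i) rfl

theorem mem_dom_of_append_singleton (t : Coterm σ X) {p : List ℕ} {i : ℕ}
    (h : p ++ [i] ∈ t.dom) : p ∈ t.dom :=
  t.mem_dom_of_prefix (List.prefix_append p [i]) h

open scoped Classical in
noncomputable def restrict (t : Coterm σ X) (P : Set (List ℕ))
    (hP : ∀ p i, p ++ [i] ∈ P → p ∈ P) : Coterm σ X where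
  label p := if p ∈ P then t.label p else none
  consistent p i h := by
    by_cases hi : p ++ [i] ∈ P
    · rw [if_pos hi] at h
      rw [if_pos (hP p i hi)]
      exact t.consistent p i h
    · simp [hi] at h

variable {P : Set (List ℕ)} {hP : ∀ p i, p ++ [i] ∈ P → p ∈ P}

theorem label_restrict_of_mem (t : Coterm σ X) {p : List ℕ} (hp : p ∈ P) :
    (t.restrict P hP).label p = t.label p := by
  simp [restrict, hp]

theorem label_restrict_of_notMem (t : Coterm σ X) {p : List ℕ} (hp : p ∉ P) :
    (t.restrict P hP).label p = none := by
  simp [restrict, hp]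

theorem restrict_le (t : Coterm σ X) : t.restrict P hP ≤ t := by
  intro p v h
  by_cases hp : p ∈ P
  · rwa [label_restrict_of_mem t hp] at h
  · simp [label_restrict_of_notMem t hp] at h

theorem dom_restrict_subset (t : Coterm σ X) : (t.restrict P hP).dom ⊆ P := by
  intro p h
  by_contra hp
  simp [mem_dom, label_restrict_of_notMem t hp] at h

theorem le_restrict {s t : Coterm σ X} (hst : s ≤ t) (hs : s.dom ⊆ P) : s ≤ t.restrict P hP := by
  intro p v h
  rw [label_restrict_of_mem t (hs (by simp [mem_dom, h]))]
  exact hst p v h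

theorem eq_restrict_dom {s t : Coterm σ X} (hst : s ≤ t) :
    s = t.restrict s.dom (fun _ _ => s.mem_dom_of_append_singleton) := by
  refine le_antisymm (le_restrict hst subset_rfl) fun p v h => ?_
  have hp : p ∈ s.dom := by
    by_contra hp
    simp [label_restrict_of_notMem t hp] at h
  obtain ⟨w, hw⟩ := Option.isSome_iff_exists.1 hp
  rw [label_restrict_of_mem t hp, hst p w hw] at h
  rwa [← h]

theorem exists_mem_label_eq_of_isLUB {D : Set (Coterm σ X)} {w : Coterm σ X} (hw : IsLUB D w)
    {p : List ℕ} {v : σ.symb ⊕ X} (hp : w.label p = some v) : ∃ d ∈ D, d.label p = some v := by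
  by_contra! hD
  -- otherwise cutting off the subtree of `w` at `p` leaves an upper bound of `D`
  let w' := w.restrict {q | ¬ p <+: q}
    (fun q i h hq => h (hq.trans (List.prefix_append q [i])))
  have hub : w' ∈ upperBounds D := fun d hd =>
    le_restrict (hw.1 hd) fun q hq hpq => by
      obtain ⟨u, hu⟩ := Option.isSome_iff_exists.1 (d.mem_dom_of_prefix hpq hq)
      have := hw.1 hd p u hu
      rw [hp, Option.some_inj] at this
      exact hD d hd (this ▸ hu)
  simpa [w', label_restrict_of_notMem] using hw.2 hub p v hp

def graph (t : Coterm σ X) : Set (List ℕ × (σ.symb ⊕ X)) := {pv | t.label pv.1 = some pv.2}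

theorem le_iff_graph_subset {s t : Coterm σ X} : s ≤ t ↔ s.graph ⊆ t.graph :=
  ⟨fun h pv => h pv.1 pv.2, fun h p v => @h (p, v)⟩

theorem IsFinite.graph_finite {t : Coterm σ X} (ht : t.IsFinite) : t.graph.Finite := by
  refine Set.Finite.of_finite_image (f := Prod.fst) (ht.subset ?_) fun pv hpv pv' hpv' h => ?_
  · rintro _ ⟨pv, hpv, rfl⟩
    simp [show t.label pv.1 = some pv.2 from hpv]
  · have : some pv.2 = some pv'.2 := (hpv : t.label pv.1 = _) ▸ h ▸ hpv'
    exact Prod.ext h (Option.some_inj.1 this)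

theorem IsFinite.exists_le_of_le_isLUB {D : Set (Coterm σ X)} {w s : Coterm σ X}
    (hD : DirectedOn (· ≤ ·) D) (hne : D.Nonempty) (hw : IsLUB D w) (hs : s.IsFinite)
    (hsw : s ≤ w) : ∃ d ∈ D, s ≤ d := by
  have hcover : (hs.graph_finite.toFinset : Set _) ⊆ ⋃ d ∈ D, d.graph := by
    rintro ⟨p, v⟩ hpv
    rw [Set.Finite.coe_toFinset] at hpv
    obtain ⟨d, hd, hdp⟩ := exists_mem_label_eq_of_isLUB hw (hsw p v hpv)
    exact Set.mem_biUnion hd hdp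
  obtain ⟨d, hd, hsd⟩ := hD.mono (fun _ _ => le_iff_graph_subset.1)
    |>.exists_mem_subset_of_finset_subset_biUnion hne hcover
  exact ⟨d, hd, le_iff_graph_subset.2 (by simpa using hsd)⟩

def approx (t : Coterm σ X) : Set (Coterm σ X) := {s | Ll s t}

theorem approx_nonempty (t : Coterm σ X) : t.approx.Nonempty :=
  ⟨⊥, by simp [IsFinite], bot_le⟩

theorem directedOn_approx (t : Coterm σ X) : DirectedOn (· ≤ ·) t.approx := by
  rintro u ⟨hu, hut⟩ u' ⟨hu', hu't⟩
  let w := t.restrict (u.dom ∪ u'.dom) fun p i h =>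
    h.imp u.mem_dom_of_append_singleton u'.mem_dom_of_append_singleton
  refine ⟨w, ⟨(hu.union hu').subset (dom_restrict_subset t), restrict_le t⟩, ?_, ?_⟩
  · exact le_restrict hut Set.subset_union_left
  · exact le_restrict hu't Set.subset_union_right

theorem countable_approx (t : Coterm σ X) : t.approx.Countable := by
  refine Set.countable_of_injective_of_countable_image (f := dom) (fun u hu u' hu' h => ?_) ?_
  · rw [eq_restrict_dom hu.2, eq_restrict_dom hu'.2]
    congr
  · refine (Set.countable_ofPred_finite_subset Set.countable_univ).mono ?_
    rintro _ ⟨u, hu, rfl⟩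
    exact ⟨hu.1, Set.subset_univ _⟩

theorem isLUB_approx (t : Coterm σ X) : IsLUB t.approx t := by
  refine ⟨fun u hu => hu.2, fun b hb p v hp => ?_⟩
  let branch := t.restrict {q | q <+: p} fun q i h => (List.prefix_append q [i]).trans h
  have hbranch : branch ∈ t.approx := by
    refine ⟨?_, restrict_le t⟩
    refine (List.finite_toSet p.inits).subset ((dom_restrict_subset t).trans fun q hq => ?_)
    simpa [List.mem_inits] using hq
  exact hb hbranch p v (by rwa [label_restrict_of_mem t (List.prefix_refl p)])

@[simp] theorem label_rename (h : X → Y) (t : Coterm σ X) (p : List ℕ) :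
    (rename h t).label p = (t.label p).map (Sum.map id h) := rfl

theorem rename_bot (h : X → Y) : rename h (⊥ : Coterm σ X) = ⊥ := rfl

theorem rename_var (h : X → Y) (x : X) : rename h (var x : Coterm σ X) = var (h x) := by
  refine ext' (funext fun p => ?_)
  by_cases hp : p = [] <;> simp [hp]

theorem rename_node (h : X → Y) (f : σ.symb) (ts : Fin (σ.ar f) → Coterm σ X) :
    rename h (node f ts) = node f (fun i => rename h (ts i)) := by
  refine ext' (funext fun p => ?_)
  rcases p with _ | ⟨i, q⟩
  · rfl
  · by_cases hi : i < σ.ar f <;> simp [hi]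

theorem rename_mono (h : X → Y) : Monotone (rename h : Coterm σ X → Coterm σ Y) :=
  fun _ _ hst p v hp => by
    obtain ⟨w, hw, rfl⟩ := Option.map_eq_some_iff.1 hp
    simp [hst p w hw]

theorem isLUB_rename (h : X → Y) {D : Set (Coterm σ X)} {w : Coterm σ X} (hw : IsLUB D w) :
    IsLUB (rename h '' D) (rename h w) := by
  refine ⟨Set.forall_mem_image.2 fun d hd => rename_mono h (hw.1 hd), fun b hb p v hp => ?_⟩
  obtain ⟨u, hu, rfl⟩ := Option.map_eq_some_iff.1 hp
  obtain ⟨d, hd, hdp⟩ := exists_mem_label_eq_of_isLUB hw hu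
  exact hb ⟨d, hd, rfl⟩ p _ (by simp [hdp])

theorem rename_isOmegaContMorphism (h : X → Y) :
    IsOmegaContMorphism (rename h : Coterm σ X → Coterm σ Y) where
  monotone := rename_mono h
  strict := rename_bot h
  ops := rename_node h
  cont _ _ _ _ _ hw := isLUB_rename h hw

end Coterm

namespace IsOmegaContMorphism

variable {σ : Signature} {X Y Z : Type*}

theorem comp {g : Coterm σ Y → Coterm σ Z} {g' : Coterm σ X → Coterm σ Y}
    (hg : IsOmegaContMorphism g) (hg' : IsOmegaContMorphism g') :
    IsOmegaContMorphism (g ∘ g') where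
  monotone := hg.monotone.comp hg'.monotone
  strict := by simp [hg'.strict, hg.strict]
  ops f ts := by simp [hg'.ops, hg.ops]
  cont S hc hne hdir t ht := by
    rw [Set.image_comp]
    exact hg.cont _ (hc.image g') (hne.image g') (hdir.mono_comp hg'.monotone) _
      (hg'.cont S hc hne hdir t ht)

theorem isLUB_image_approx {g : Coterm σ X → Coterm σ Y} (hg : IsOmegaContMorphism g)
    (t : Coterm σ X) : IsLUB (g '' t.approx) (g t) :=
  hg.cont _ t.countable_approx t.approx_nonempty t.directedOn_approx t t.isLUB_approx

theorem exists_mem_approx_le {g : Coterm σ X → Coterm σ Y} (hg : IsOmegaContMorphism g)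
    {s : Coterm σ Y} {t : Coterm σ X} (hs : s.IsFinite) (hst : s ≤ g t) :
    ∃ u ∈ t.approx, s ≤ g u := by
  obtain ⟨_, ⟨u, hu, rfl⟩, hsu⟩ := hs.exists_le_of_le_isLUB
    (t.directedOn_approx.mono_comp hg.monotone) (t.approx_nonempty.image g)
    (hg.isLUB_image_approx t) hst
  exact ⟨u, hu, hsu⟩

end IsOmegaContMorphism

namespace QuasiRegular

variable {σ : Signature} (Q : QuasiRegular σ) {X : Type}

theorem mem_of_isFinite {t : Coterm σ X} (ht : t.IsFinite) : t ∈ Q.Del X :=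
  ht.induction_on (Q.bot_mem X) (Q.var_mem X) fun f ts _ h => Q.op_closed X f ts h

end QuasiRegular

namespace IsDelStructure

open Coterm

variable {σ : Signature} {Q : QuasiRegular σ} {A : Type} [PartialOrder A] [OrderBot A]
  {alg : OrderedAlg σ A} {β : Coterm σ A → A}

theorem map_le_of_ll (hβ : IsDelStructure Q alg β) {s t : Coterm σ A} (ht : t ∈ Q.Del A)
    (hst : Ll s t) : β s ≤ β t :=
  (hβ.2.1 t ht).1 ⟨s, hst, rfl⟩

theorem map_le_of_forall_ll (hβ : IsDelStructure Q alg β) {t : Coterm σ A} (ht : t ∈ Q.Del A)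
    {b : A} (h : ∀ s, Ll s t → β s ≤ b) : β t ≤ b :=
  (hβ.2.1 t ht).2 (by rintro _ ⟨s, hs, rfl⟩; exact h s hs)

theorem map_mono (hβ : IsDelStructure Q alg β) {t t' : Coterm σ A} (ht : t ∈ Q.Del A)
    (ht' : t' ∈ Q.Del A) (h : t ≤ t') : β t ≤ β t' :=
  hβ.map_le_of_forall_ll ht fun _ hs => hβ.map_le_of_ll ht' ⟨hs.1, hs.2.trans h⟩

theorem map_node (hβ : IsDelStructure Q alg β) {f : σ.symb} {ds : Fin (σ.ar f) → Coterm σ A}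
    (hds : ∀ i, ds i ∈ Q.Del A) : β (node f ds) = alg.op f (fun i => β (ds i)) := by
  obtain ⟨hbot, -, hnode, -⟩ := hβ.1
  have hmem := Q.op_closed A f ds hds
  refine le_antisymm (hβ.map_le_of_forall_ll hmem fun s hs => ?_) ?_
  · obtain ⟨hs, hsd⟩ := hs
    rcases eq_bot_or_var_or_node s with rfl | ⟨x, rfl⟩ | ⟨g, ss, rfl⟩
    · exact hbot ▸ bot_le
    · simpa using hsd [] _ rfl
    · obtain rfl : f = g := by simpa using hsd [] _ rfl
      rw [hnode f ss (isFinite_node.1 hs)]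
      exact alg.mono f _ _ fun i =>
        hβ.map_le_of_ll (hds i) ⟨isFinite_node.1 hs i, node_le_node_iff.1 hsd i⟩
  · refine le_of_forall_pi_le_of_update_le (D := fun i => {y | ∃ s, Ll s (ds i) ∧ y = β s})
      (fun a i h => (hβ.2.2 f a i (ds i) (hds i)).2 ?_) fun y hy => ?_
    · rintro _ ⟨s, hs, rfl⟩
      exact h _ ⟨s, hs, rfl⟩
    · choose ss hss hy using hy
      rw [funext hy, ← hnode f ss fun i => (hss i).1]
      exact hβ.map_le_of_ll hmem ⟨isFinite_node.2 fun i => (hss i).1,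
        node_le_node_iff.2 fun i => (hss i).2⟩

variable {Y : Type} {g₁ g₂ : Coterm σ Y → Coterm σ A}

theorem map_comp_eq_of_isFinite (hβ : IsDelStructure Q alg β) (hg₁ : IsOmegaContMorphism g₁)
    (hg₂ : IsOmegaContMorphism g₂) (hΔ₁ : ∀ y, g₁ (var y) ∈ Q.Del A)
    (hΔ₂ : ∀ y, g₂ (var y) ∈ Q.Del A) (hvar : ∀ y, β (g₁ (var y)) = β (g₂ (var y)))
    {u : Coterm σ Y} (hu : u.IsFinite) : β (g₁ u) = β (g₂ u) := by
  refine hu.induction_on (P := fun u => β (g₁ u) = β (g₂ u)) (by rw [hg₁.strict, hg₂.strict])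
    hvar fun f ts hts ih => ?_
  have hmem {g : Coterm σ Y → Coterm σ A} (hg : IsOmegaContMorphism g)
      (hΔ : ∀ y, g (var y) ∈ Q.Del A) (i : Fin (σ.ar f)) : g (ts i) ∈ Q.Del A :=
    Q.stable Y A g hg hΔ _ (Q.mem_of_isFinite (hts i))
  rw [hg₁.ops, hg₂.ops, hβ.map_node (hmem hg₁ hΔ₁), hβ.map_node (hmem hg₂ hΔ₂)]
  simp only [ih]

theorem map_comp_le (hβ : IsDelStructure Q alg β) (hg₁ : IsOmegaContMorphism g₁)
    (hg₂ : Monotone g₂) (hΔ₁ : ∀ t ∈ Q.Del Y, g₁ t ∈ Q.Del A)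
    (hΔ₂ : ∀ t ∈ Q.Del Y, g₂ t ∈ Q.Del A) (hfin : ∀ u, u.IsFinite → β (g₁ u) ≤ β (g₂ u))
    {t : Coterm σ Y} (ht : t ∈ Q.Del Y) : β (g₁ t) ≤ β (g₂ t) := by
  refine hβ.map_le_of_forall_ll (hΔ₁ t ht) fun s hs => ?_
  obtain ⟨u, hu, hsu⟩ := hg₁.exists_mem_approx_le hs.1 hs.2
  have hu' := Q.mem_of_isFinite hu.1
  calc β s ≤ β (g₁ u) := hβ.map_le_of_ll (hΔ₁ u hu') ⟨hs.1, hsu⟩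
    _ ≤ β (g₂ u) := hfin u hu.1
    _ ≤ β (g₂ t) := hβ.map_mono (hΔ₂ u hu') (hΔ₂ t ht) (hg₂ hu.2)

theorem map_comp_eq (hβ : IsDelStructure Q alg β) (hg₁ : IsOmegaContMorphism g₁)
    (hg₂ : IsOmegaContMorphism g₂) (hΔ₁ : ∀ y, g₁ (var y) ∈ Q.Del A)
    (hΔ₂ : ∀ y, g₂ (var y) ∈ Q.Del A) (hvar : ∀ y, β (g₁ (var y)) = β (g₂ (var y)))
    {t : Coterm σ Y} (ht : t ∈ Q.Del Y) : β (g₁ t) = β (g₂ t) := by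
  have hfin (u : Coterm σ Y) (hu : u.IsFinite) := hβ.map_comp_eq_of_isFinite hg₁ hg₂ hΔ₁ hΔ₂ hvar hu
  have hmem₁ := Q.stable Y A g₁ hg₁ hΔ₁
  have hmem₂ := Q.stable Y A g₂ hg₂ hΔ₂
  exact le_antisymm
    (hβ.map_comp_le hg₁ hg₂.monotone hmem₁ hmem₂ (fun u hu => (hfin u hu).le) ht)
    (hβ.map_comp_le hg₂ hg₁.monotone hmem₂ hmem₁ (fun u hu => (hfin u hu).ge) ht)

end IsDelStructure

/-- Let `A` be a Δ-regular algebra with structure map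
`β : FT(A) → A` extended to `ΔA` by `β(t) = ⋁{β(s) : s ≪ t}`.  Then `(A, β)`
is an Eilenberg–Moore algebra for the monad `Δ`: `β(x) = x` on variables, and
`β ∘ μ^Δ_A = β ∘ Δβ` on `Δ(ΔA)` (where `ΔA` is encoded as the subtype of
coterms lying in `Q.Del A`, `μ^Δ` is the flattening of the coterm monad, and
`Δβ` is relabeling of variables by `β`). -/
theorem stmt_11 (σ : Signature) (Q : QuasiRegular σ) (A : Type)
    [PartialOrder A] [OrderBot A] (alg : OrderedAlg σ A)
    (β : Coterm σ A → A) (hβ : IsDelStructure Q alg β)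
    (flat : Coterm σ (Coterm σ A) → Coterm σ A) (hflat : IsFlatten flat) :
    (∀ a : A, β (Coterm.var a) = a) ∧
    (∀ t : Coterm σ {s : Coterm σ A // s ∈ Q.Del A},
      t ∈ Q.Del {s : Coterm σ A // s ∈ Q.Del A} →
      β (flat (Coterm.rename Subtype.val t)) =
        β (Coterm.rename (fun s => β s.1) t)) := by
  obtain ⟨hflat, hflat_var⟩ := hflat
  have hβ_var : ∀ a : A, β (Coterm.var a) = a := hβ.1.2.1
  refine ⟨hβ_var, fun t ht => ?_⟩
  refine hβ.map_comp_eq (g₁ := flat ∘ Coterm.rename Subtype.val)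
    (hflat.comp (Coterm.rename_isOmegaContMorphism _)) (Coterm.rename_isOmegaContMorphism _)
    (fun s => ?_) (fun s => ?_) (fun s => ?_) ht
  · simp [Coterm.rename_var, hflat_var]
  · simp [Coterm.rename_var, Q.var_mem]
  · simp [Coterm.rename_var, hflat_var, hβ_var]
end
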